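/- For the k-of-n utility function g(b) = k(n−k+1) − ((n−k+1) − g0(b))(k − g1(b)), where g1(b) = min{k, #{i : b_i = 1}} and g0(b) = min{n−k+1, #{i : b_i = 0}}, and any b ∈ {0,1,*}^n with g(b) < k(n−k+1) and any i with b_i = *, we have max(Δg(b,i,0), Δg(b,i,1)) ≥ (k(n−k+1) − g(b))/k. In particular the parameter ρ for g is at least 1/k. -/
import Mathlib

/-- `b_{i←γ}`. -/
def updPR {n : ℕ} (b : Fin n → Option Bool) (i : Fin n) (γ : Bool) :
    Fin n → Option Bool := Function.update b i (some γ)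

/-- Number of coordinates of `b` set to `1` (true). -/
def numT {n : ℕ} (b : Fin n → Option Bool) : ℕ :=
  (Finset.univ.filter fun i => b i = some true).card

/-- Number of coordinates of `b` set to `0` (false). -/
def numF {n : ℕ} (b : Fin n → Option Bool) : ℕ :=
  (Finset.univ.filter fun i => b i = some false).card

/-- `g1(b) = min{k, #ones(b)}`. -/
def gOne {n : ℕ} (k : ℕ) (b : Fin n → Option Bool) : ℤ := min (k : ℤ) (numT b : ℤ)

/-- `g0(b) = min{n−k+1, #zeros(b)}`. -/
def gZero {n : ℕ} (k : ℕ) (b : Fin n → Option Bool) : ℤ :=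
  min ((n : ℤ) - k + 1) (numF b : ℤ)

/-- The `k`-of-`n` utility function
`g(b) = k(n−k+1) − ((n−k+1) − g0(b))·(k − g1(b))`. -/
def gkn {n : ℕ} (k : ℕ) (b : Fin n → Option Bool) : ℤ :=
  (k : ℤ) * ((n : ℤ) - k + 1) - (((n : ℤ) - k + 1) - gZero k b) * ((k : ℤ) - gOne k b)

lemma filter_upd_same {n : ℕ} (b : Fin n → Option Bool) (i : Fin n) (hbi : b i = none)
    (γ : Bool) :
    (Finset.univ.filter fun j => updPR b i γ j = some γ)
      = insert i (Finset.univ.filter fun j => b j = some γ) := by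
  ext j
  simp only [Finset.mem_filter, Finset.mem_insert, Finset.mem_univ, true_and, updPR,
    Function.update]
  rcases eq_or_ne j i with rfl | hj
  · simp
  · simp [hj]

lemma filter_upd_other {n : ℕ} (b : Fin n → Option Bool) (i : Fin n) (hbi : b i = none)
    (γ : Bool) :
    (Finset.univ.filter fun j => updPR b i γ j = some (!γ))
      = (Finset.univ.filter fun j => b j = some (!γ)) := by
  ext j
  simp only [Finset.mem_filter, Finset.mem_univ, true_and, updPR, Function.update]
  rcases eq_or_ne j i with rfl | hj
  · simp [hbi]
  · simp [hj]

lemma numT_upd_true {n : ℕ} (b : Fin n → Option Bool) (i : Fin n) (hbi : b i = none) :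
    numT (updPR b i true) = numT b + 1 := by
  unfold numT
  rw [filter_upd_same b i hbi true, Finset.card_insert_of_notMem (by simp [hbi])]

lemma numF_upd_true {n : ℕ} (b : Fin n → Option Bool) (i : Fin n) (hbi : b i = none) :
    numF (updPR b i true) = numF b := by
  unfold numF
  have := filter_upd_other b i hbi true
  simpa using congrArg Finset.card this

lemma numF_upd_false {n : ℕ} (b : Fin n → Option Bool) (i : Fin n) (hbi : b i = none) :
    numF (updPR b i false) = numF b + 1 := by
  unfold numF
  rw [filter_upd_same b i hbi false, Finset.card_insert_of_notMem (by simp [hbi])]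

lemma numT_upd_false {n : ℕ} (b : Fin n → Option Bool) (i : Fin n) (hbi : b i = none) :
    numT (updPR b i false) = numT b := by
  unfold numT
  have := filter_upd_other b i hbi false
  simpa using congrArg Finset.card this

/-- For the `k`-of-`n` utility function: whenever `g(b) < Q = k(n−k+1)` and `b_i = *`,
`max(Δg(b,i,0), Δg(b,i,1)) ≥ (Q − g(b))/k`; i.e. the parameter `ρ` is at least `1/k`. -/
theorem stmt_7 {n k : ℕ} (hk1 : 1 ≤ k) (hkn : k ≤ n) :
    ∀ (b : Fin n → Option Bool) (i : Fin n), b i = none →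
      gkn k b < (k : ℤ) * ((n : ℤ) - k + 1) →
      (k : ℤ) * ((n : ℤ) - k + 1) - gkn k b ≤
        (k : ℤ) * max (gkn k (updPR b i false) - gkn k b)
          (gkn k (updPR b i true) - gkn k b) := by
  intro b i hbi hlt
  have hAB : (k : ℤ) * ((n : ℤ) - k + 1) - gkn k b
      = (((n : ℤ) - k + 1) - gZero k b) * ((k : ℤ) - gOne k b) := by
    unfold gkn; ring
  set A : ℤ := ((n : ℤ) - k + 1) - gZero k b with hA
  set B : ℤ := (k : ℤ) - gOne k b with hB
  have hApos : 0 ≤ A := by simp [hA, gZero]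
  have hBpos : 0 ≤ B := by simp [hB, gOne]
  have hprod : 0 < A * B := by rw [← hAB]; omega
  have hApos' : 0 < A := by nlinarith
  have hBpos' : 0 < B := by nlinarith
  have hT : (numT b : ℤ) < k := by
    have : gOne k b < k := by omega
    simp only [gOne, min_lt_iff] at this
    omega
  have hF : (numF b : ℤ) < (n : ℤ) - k + 1 := by
    have : gZero k b < (n : ℤ) - k + 1 := by omega
    simp only [gZero, min_lt_iff] at this
    omega
  have e1 : gOne k (updPR b i true) = gOne k b + 1 := by
    simp only [gOne, numT_upd_true b i hbi]
    push_cast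
    omega
  have e2 : gZero k (updPR b i true) = gZero k b := by
    simp [gZero, numF_upd_true b i hbi]
  have e3 : gZero k (updPR b i false) = gZero k b + 1 := by
    simp only [gZero, numF_upd_false b i hbi]
    push_cast
    omega
  have e4 : gOne k (updPR b i false) = gOne k b := by
    simp [gOne, numT_upd_false b i hbi]
  have dT : gkn k (updPR b i true) - gkn k b = A := by
    unfold gkn
    rw [e1, e2]; ring
  have dF : gkn k (updPR b i false) - gkn k b = B := by
    unfold gkn
    rw [e3, e4]; ring
  rw [hAB, dT, dF]
  have hBk : B ≤ (k : ℤ) := by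
    have : 0 ≤ gOne k b := le_min (by positivity) (by positivity)
    omega
  have h1 := le_max_right B A
  nlinarith [le_max_right B A]
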